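/- Let F = (ℝ^d, ‖·‖) be a finite-dimensional Banach space, E ⊆ F a linear subspace, P ∈ M_d(ℝ) the matrix of the orthogonal projection onto E, and A ∈ M_d(ℝ) a matrix with AP = PAP. Then for every projection matrix Q with range E, Tr(AP) = Tr(AQ) ≤ ν₁(A)·‖Q‖_{L(F)}, where ν₁ is the 1-nuclear norm on L(F). In particular, Tr(AP) ≤ ν₁(A)·λ(E,F). -/

import Mathlib

/-! Idempotent matrices `P`, `Q` with the same range satisfy `PQ = Q` and `QP = P`, so with
`AP = PAP` we get `Tr(AP) = Tr(APQP) = Tr(PAPQ) = Tr(AQ)`. For any decomposition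
`A = Σ fᵢ ⊗ xᵢ`, `Tr(AQ) = Σ fᵢ(Q xᵢ) ≤ ‖Q‖ Σ ‖fᵢ‖‖xᵢ‖`; taking the infimum over decompositions
gives the bound by `ν₁(A)‖Q‖`, and then the infimum over `Q` the bound by `ν₁(A)·λ(E,F)`. -/

noncomputable section

/-- The operator on the `d`-dimensional Banach space `F` (identified with `ℝ^d` via the
linear equivalence `φ`) induced by a `d × d` matrix `A`. -/
def matOp (d : ℕ) (F : Type) [NormedAddCommGroup F] [NormedSpace ℝ F]
    [FiniteDimensional ℝ F] (φ : F ≃ₗ[ℝ] (Fin d → ℝ))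
    (A : Matrix (Fin d) (Fin d) ℝ) : F →L[ℝ] F :=
  LinearMap.toContinuousLinearMap ((φ.symm.toLinearMap ∘ₗ A.mulVecLin) ∘ₗ φ.toLinearMap)

/-- The 1-nuclear norm `ν₁(A)` of a matrix `A` acting on the Banach space `F`:
the infimum of `Σ ‖f_i‖_{F*}·‖x_i‖_F` over all rank-one decompositions
`A = Σ f_i ⊗ x_i`. -/
def nuclearNorm (d : ℕ) (F : Type) [NormedAddCommGroup F] [NormedSpace ℝ F]
    [FiniteDimensional ℝ F] (φ : F ≃ₗ[ℝ] (Fin d → ℝ))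
    (A : Matrix (Fin d) (Fin d) ℝ) : ℝ :=
  sInf {c : ℝ | ∃ (m : ℕ) (g : Fin m → StrongDual ℝ F) (x : Fin m → F),
    (∀ v : F, matOp d F φ A v = ∑ i, g i v • x i) ∧ c = ∑ i, ‖g i‖ * ‖x i‖}

end

theorem Real.le_sInf_mul {S : Set ℝ} {x t : ℝ} (hS : S.Nonempty) (ht : 0 ≤ t)
    (h : ∀ c ∈ S, x ≤ c * t) : x ≤ sInf S * t := by
  rw [mul_comm, ← smul_eq_mul, ← Real.sInf_smul_of_nonneg ht]
  refine le_csInf (hS.smul_set) ?_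
  rintro _ ⟨c, hc, rfl⟩
  show x ≤ t * c
  rw [mul_comm]
  exact h c hc

namespace Matrix

variable {n R : Type*} [Fintype n] [DecidableEq n] [CommRing R]

theorem mul_eq_right_of_range_le {P Q : Matrix n n R} (hP : IsIdempotentElem P)
    (hrange : LinearMap.range Q.mulVecLin ≤ LinearMap.range P.mulVecLin) : P * Q = Q := by
  have hP' : IsIdempotentElem P.mulVecLin := (mulVecLin_mul P P).symm.trans (congrArg _ hP.eq)
  apply toLin'.injective
  rw [toLin'_mul, toLin'_apply', toLin'_apply']
  exact (LinearMap.IsIdempotentElem.comp_eq_right_iff hP' _).mpr hrange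

theorem trace_mul_eq_of_range_eq {A P Q : Matrix n n R} (hP : IsIdempotentElem P)
    (hQ : IsIdempotentElem Q) (hrange : LinearMap.range Q.mulVecLin = LinearMap.range P.mulVecLin)
    (hA : A * P = P * A * P) : (A * P).trace = (A * Q).trace := by
  have hPQ : P * Q = Q := mul_eq_right_of_range_le hP hrange.le
  have hQP : Q * P = P := mul_eq_right_of_range_le hQ hrange.ge
  calc (A * P).trace = (A * P * Q * P).trace := by rw [mul_assoc _ Q, hQP, mul_assoc, hP.eq]
    _ = (P * A * P * Q).trace := by rw [trace_mul_comm, ← mul_assoc, ← mul_assoc]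
    _ = (A * Q).trace := by rw [← hA, mul_assoc, hPQ]

end Matrix

theorem LinearMap.trace_eq_sum_of_forall_eq_sum_smul {R M ι : Type*} [CommRing R]
    [AddCommGroup M] [Module R M] [Module.Free R M] [Module.Finite R M] [Fintype ι]
    (T : M →ₗ[R] M) (g : ι → M →ₗ[R] R) (x : ι → M) (h : ∀ v, T v = ∑ i, g i v • x i) :
    trace R M T = ∑ i, g i (x i) := by
  have hT : T = ∑ i, (g i).smulRight (x i) := by
    ext v
    simp [h]
  simp [hT]

theorem exists_forall_eq_sum_smul {𝕜 E F : Type*} [NontriviallyNormedField 𝕜] [CompleteSpace 𝕜]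
    [NormedAddCommGroup E] [NormedSpace 𝕜 E] [FiniteDimensional 𝕜 E] [AddCommGroup F]
    [Module 𝕜 F] (T : E →ₗ[𝕜] F) :
    ∃ (m : ℕ) (g : Fin m → StrongDual 𝕜 E) (x : Fin m → F), ∀ v, T v = ∑ i, g i v • x i := by
  let b := Module.finBasis 𝕜 E
  refine ⟨_, fun i => LinearMap.toContinuousLinearMap (b.coord i), fun i => T (b i), fun v => ?_⟩
  conv_lhs => rw [← b.sum_repr v]
  simp only [map_sum, map_smul, LinearMap.coe_toContinuousLinearMap', Module.Basis.coord_apply]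

theorem trace_comp_le_sum_mul_opNorm {F ι : Type*} [NormedAddCommGroup F] [NormedSpace ℝ F]
    [FiniteDimensional ℝ F] [Fintype ι] (T B : F →L[ℝ] F) (g : ι → StrongDual ℝ F) (x : ι → F)
    (h : ∀ v, T v = ∑ i, g i v • x i) :
    LinearMap.trace ℝ F (T ∘L B : F →L[ℝ] F) ≤ (∑ i, ‖g i‖ * ‖x i‖) * ‖B‖ := by
  rw [LinearMap.trace_eq_sum_of_forall_eq_sum_smul _ (fun i => (g i : F →ₗ[ℝ] ℝ) ∘ₗ B) x
    (fun v => h (B v)), Finset.sum_mul]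
  refine Finset.sum_le_sum fun i _ => ?_
  calc g i (B (x i)) ≤ ‖g i‖ * ‖B (x i)‖ := (le_abs_self _).trans ((g i).le_opNorm _)
    _ ≤ ‖g i‖ * (‖B‖ * ‖x i‖) := by gcongr; exact B.le_opNorm _
    _ = ‖g i‖ * ‖x i‖ * ‖B‖ := by ring

section matOp

variable {d : ℕ} {F : Type} [NormedAddCommGroup F] [NormedSpace ℝ F] [FiniteDimensional ℝ F]
  (φ : F ≃ₗ[ℝ] (Fin d → ℝ))

theorem matOp_mul (A B : Matrix (Fin d) (Fin d) ℝ) :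
    matOp d F φ (A * B) = matOp d F φ A ∘L matOp d F φ B := by
  ext v
  simp [matOp, Matrix.mulVec_mulVec]

theorem trace_matOp (A : Matrix (Fin d) (Fin d) ℝ) :
    LinearMap.trace ℝ F (matOp d F φ A) = A.trace := by
  have h : (matOp d F φ A : F →ₗ[ℝ] F) = φ.symm.conj (Matrix.toLin' A) := rfl
  rw [h, LinearMap.trace_conj', Matrix.trace_toLin'_eq]

theorem nuclearNorm_nonneg (A : Matrix (Fin d) (Fin d) ℝ) : 0 ≤ nuclearNorm d F φ A :=
  Real.sInf_nonneg <| by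
    rintro _ ⟨m, g, x, -, rfl⟩
    positivity

theorem trace_mul_le_nuclearNorm_mul_norm (A B : Matrix (Fin d) (Fin d) ℝ) :
    (A * B).trace ≤ nuclearNorm d F φ A * ‖matOp d F φ B‖ := by
  obtain ⟨m, g, x, hdec⟩ := exists_forall_eq_sum_smul (matOp d F φ A : F →ₗ[ℝ] F)
  refine Real.le_sInf_mul ⟨_, m, g, x, hdec, rfl⟩ (norm_nonneg _) ?_
  rintro _ ⟨m, g, x, hdec, rfl⟩
  rw [← trace_matOp φ, matOp_mul]
  exact trace_comp_le_sum_mul_opNorm _ _ g x hdec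

end matOp

theorem trace_duality_projection (d : ℕ) (F : Type) [NormedAddCommGroup F]
    [NormedSpace ℝ F] [FiniteDimensional ℝ F] (φ : F ≃ₗ[ℝ] (Fin d → ℝ))
    (A P Q : Matrix (Fin d) (Fin d) ℝ)
    (hPproj : P * P = P)
    (hQproj : Q * Q = Q)
    (hQrange : LinearMap.range Q.mulVecLin = LinearMap.range P.mulVecLin)
    (hA : A * P = P * A * P) :
    (A * P).trace = (A * Q).trace ∧
    (A * Q).trace ≤ nuclearNorm d F φ A * ‖matOp d F φ Q‖ ∧
    (A * P).trace ≤ nuclearNorm d F φ A *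
      sInf {c : ℝ | ∃ Q' : Matrix (Fin d) (Fin d) ℝ, Q' * Q' = Q' ∧
        LinearMap.range Q'.mulVecLin = LinearMap.range P.mulVecLin ∧
        c = ‖matOp d F φ Q'‖} := by
  refine ⟨Matrix.trace_mul_eq_of_range_eq hPproj hQproj hQrange hA, trace_mul_le_nuclearNorm_mul_norm φ A Q, ?_⟩
  rw [mul_comm]
  refine Real.le_sInf_mul ⟨_, P, hPproj, rfl, rfl⟩ (nuclearNorm_nonneg φ A) ?_
  rintro _ ⟨Q', hQ', hrange, rfl⟩
  rw [Matrix.trace_mul_eq_of_range_eq hPproj hQ' hrange hA, mul_comm]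
  exact trace_mul_le_nuclearNorm_mul_norm φ A Q'
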